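/- arXiv:1903.06406 — 3 statements merged into one kernel-verified Lean document; each statement's English description precedes it below -/
import Mathlib

section
/- Let K ≥ 1 and let x ∈ ℝ^K have nonnegative entries with S_K ≤ 1 and S_j < 1 for every j ≤ K−1. Define the K×K matrix ζ(x) by ζ_ij(x) = 0 for i < j, ζ_ii(x) = √(x_i(1−S_i)/(1−S_{i−1})), and ζ_ij(x) = −x_i √(x_j/((1−S_{j−1})(1−S_j))) for i > j. Then for all i, j ∈ {1,…,K}, ∑_{k=1}^K ζ_ik(x) ζ_jk(x) = x_i (δ_{ij} − x_j), where δ_{ij} = 1 if i = j and 0 otherwise. In particular ζ(x)ζ(x)ᵀ equals the Wright–Fisher covariance matrix σ(x) with σ_ij(x) = (1_{j=i} − x_j) x_i. -/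
open Finset

/-- The lower-triangular matrix ζ used as diffusion coefficient in the multidimensional
Λ-Wright–Fisher SDE satisfies ζ(x)ζ(x)ᵀ = σ(x), the Wright–Fisher covariance matrix. -/
theorem stmt0 (K : ℕ) (hK : 1 ≤ K) (x : ℕ → ℝ)
    (hx : ∀ i ∈ Icc 1 K, 0 ≤ x i)
    (S : ℕ → ℝ) (hS : ∀ j, S j = ∑ k ∈ Icc 1 j, x k)
    (hSK : S K ≤ 1) (hSlt : ∀ j ≤ K - 1, S j < 1)
    (ζ : ℕ → ℕ → ℝ)
    (hζ : ∀ i ∈ Icc 1 K, ∀ j ∈ Icc 1 K,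
      ζ i j = if i < j then 0
        else if i = j then Real.sqrt (x i * (1 - S i) / (1 - S (i - 1)))
        else -(x i) * Real.sqrt (x j / ((1 - S (j - 1)) * (1 - S j)))) :
    ∀ i ∈ Icc 1 K, ∀ j ∈ Icc 1 K,
      ∑ k ∈ Icc 1 K, ζ i k * ζ j k = x i * ((if i = j then 1 else 0) - x j) := by
  have hS0 : S 0 = 0 := by simp [hS]
  have hstep : ∀ k, 1 ≤ k → S k = S (k - 1) + x k := by
    intro k hk
    obtain ⟨m, rfl⟩ : ∃ m, k = m + 1 := ⟨k - 1, by omega⟩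
    rw [hS, hS, Finset.sum_Icc_succ_top (by omega : 1 ≤ m + 1)]
    simp
  have hmono : ∀ a b, a ≤ b → b ≤ K → S a ≤ S b := by
    intro a b hab hbK
    rw [hS, hS]
    apply Finset.sum_le_sum_of_subset_of_nonneg (Finset.Icc_subset_Icc_right hab)
    intro k hk _
    exact hx k (mem_Icc.2 ⟨(mem_Icc.1 hk).1, le_trans (mem_Icc.1 hk).2 hbK⟩)
  have hSle1 : ∀ j, j ≤ K → S j ≤ 1 := fun j hj => le_trans (hmono j K hj le_rfl) hSK
  have hpos : ∀ j, j < K → 0 < 1 - S j := by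
    intro j hj
    have := hSlt j (by omega)
    linarith
  have hnn : ∀ j, j ≤ K → 0 ≤ 1 - S j := by
    intro j hj; have := hSle1 j hj; linarith
  -- telescoping sum
  have htel : ∀ m, m < K →
      ∑ k ∈ Icc 1 m, x k / ((1 - S (k - 1)) * (1 - S k)) = 1 / (1 - S m) - 1 := by
    intro m hm
    induction m with
    | zero => simp [hS0]
    | succ n ih =>
      rw [Finset.sum_Icc_succ_top (by omega : 1 ≤ n + 1), ih (by omega)]
      have h1 : 0 < 1 - S n := hpos n (by omega)
      have h2 : 0 < 1 - S (n + 1) := hpos (n + 1) hm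
      have hx' : x (n + 1) = (1 - S n) - (1 - S (n + 1)) := by
        have := hstep (n + 1) (by omega)
        simp only [Nat.add_sub_cancel] at this
        linarith
      simp only [Nat.add_sub_cancel]
      rw [hx']
      field_simp
      ring
  -- square of off-diagonal sqrt
  have hA : ∀ k, 1 ≤ k → k < K → 0 ≤ x k / ((1 - S (k - 1)) * (1 - S k)) := by
    intro k hk hkK
    have ha : 0 < 1 - S (k - 1) := hpos (k - 1) (by omega)
    have hb : 0 < 1 - S k := hpos k hkK
    exact div_nonneg (hx k (mem_Icc.2 ⟨hk, by omega⟩)) (mul_pos ha hb).le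
  -- main case i ≤ j
  have key : ∀ i ∈ Icc 1 K, ∀ j ∈ Icc 1 K, i ≤ j →
      ∑ k ∈ Icc 1 K, ζ i k * ζ j k = x i * ((if i = j then 1 else 0) - x j) := by
    intro i hi j hj hij
    obtain ⟨hi1, hiK⟩ := mem_Icc.1 hi
    obtain ⟨hj1, hjK⟩ := mem_Icc.1 hj
    have hipos : 0 < 1 - S (i - 1) := hpos (i - 1) (by omega)
    -- split the sum
    have h1 : ∑ k ∈ Icc 1 K, ζ i k * ζ j k = ∑ k ∈ Icc 1 i, ζ i k * ζ j k := by
      refine (Finset.sum_subset (Finset.Icc_subset_Icc_right hiK) ?_).symm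
      intro k hk hk'
      have hik : i < k := by
        simp only [mem_Icc] at hk hk'; omega
      rw [hζ i hi k hk, if_pos hik, zero_mul]
    have h2 : ∑ k ∈ Icc 1 i, ζ i k * ζ j k
        = ∑ k ∈ Icc 1 (i - 1), ζ i k * ζ j k + ζ i i * ζ j i := by
      obtain ⟨m, rfl⟩ : ∃ m, i = m + 1 := ⟨i - 1, by omega⟩
      rw [Finset.sum_Icc_succ_top (by omega : 1 ≤ m + 1)]
      simp
    have hterm : ∀ k ∈ Icc 1 (i - 1), ζ i k * ζ j k
        = x i * x j * (x k / ((1 - S (k - 1)) * (1 - S k))) := by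
      intro k hk
      obtain ⟨hk1, hki⟩ := mem_Icc.1 hk
      have hkK : k < K := by omega
      have hkmem : k ∈ Icc 1 K := mem_Icc.2 ⟨hk1, by omega⟩
      rw [hζ i hi k hkmem, hζ j hj k hkmem,
        if_neg (by omega), if_neg (by omega), if_neg (by omega), if_neg (by omega)]
      have hsq := Real.mul_self_sqrt (hA k hk1 hkK)
      calc -x i * Real.sqrt (x k / ((1 - S (k - 1)) * (1 - S k))) *
            (-x j * Real.sqrt (x k / ((1 - S (k - 1)) * (1 - S k))))
          = x i * x j * (Real.sqrt (x k / ((1 - S (k - 1)) * (1 - S k))) *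
            Real.sqrt (x k / ((1 - S (k - 1)) * (1 - S k)))) := by ring
        _ = x i * x j * (x k / ((1 - S (k - 1)) * (1 - S k))) := by rw [hsq]
    have h3 : ∑ k ∈ Icc 1 (i - 1), ζ i k * ζ j k
        = x i * x j * (1 / (1 - S (i - 1)) - 1) := by
      rw [Finset.sum_congr rfl hterm, ← Finset.mul_sum, htel (i - 1) (by omega)]
    rw [h1, h2, h3]
    rcases eq_or_lt_of_le hij with rfl | hlt
    · -- diagonal case
      rw [hζ i hi i hi, if_neg (lt_irrefl i), if_pos rfl, if_pos rfl]
      have hζii : Real.sqrt (x i * (1 - S i) / (1 - S (i - 1))) *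
          Real.sqrt (x i * (1 - S i) / (1 - S (i - 1)))
          = x i * (1 - S i) / (1 - S (i - 1)) := by
        apply Real.mul_self_sqrt
        exact div_nonneg (mul_nonneg (hx i hi) (hnn i hiK)) hipos.le
      rw [hζii]
      have hSi : S i = S (i - 1) + x i := hstep i hi1
      rw [hSi]
      field_simp
      ring
    · -- off-diagonal case i < j
      have hiK' : i < K := by omega
      have hSipos : 0 < 1 - S i := hpos i hiK'
      rw [hζ i hi i hi, if_neg (lt_irrefl i), if_pos rfl,
        hζ j hj i hi, if_neg (by omega), if_neg (by omega), if_neg (by omega : ¬ i = j)]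
      have hsqrt : Real.sqrt (x i * (1 - S i) / (1 - S (i - 1))) *
          Real.sqrt (x i / ((1 - S (i - 1)) * (1 - S i)))
          = x i / (1 - S (i - 1)) := by
        rw [← Real.sqrt_mul (div_nonneg (mul_nonneg (hx i hi) hSipos.le) hipos.le)]
        have heq : x i * (1 - S i) / (1 - S (i - 1)) * (x i / ((1 - S (i - 1)) * (1 - S i)))
            = (x i / (1 - S (i - 1))) ^ 2 := by
          field_simp
        rw [heq, Real.sqrt_sq (div_nonneg (hx i hi) hipos.le)]
      calc x i * x j * (1 / (1 - S (i - 1)) - 1) +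
            Real.sqrt (x i * (1 - S i) / (1 - S (i - 1))) *
            (-x j * Real.sqrt (x i / ((1 - S (i - 1)) * (1 - S i))))
          = x i * x j * (1 / (1 - S (i - 1)) - 1) - x j *
            (Real.sqrt (x i * (1 - S i) / (1 - S (i - 1))) *
            Real.sqrt (x i / ((1 - S (i - 1)) * (1 - S i)))) := by ring
        _ = x i * x j * (1 / (1 - S (i - 1)) - 1) - x j * (x i / (1 - S (i - 1))) := by
            rw [hsqrt]
        _ = x i * (0 - x j) := by field_simp; ring
  intro i hi j hj
  rcases le_total i j with h | h
  · exact key i hi j hj h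
  · have hsym := key j hj i hi h
    rw [show (∑ k ∈ Icc 1 K, ζ i k * ζ j k) = ∑ k ∈ Icc 1 K, ζ j k * ζ i k from
      Finset.sum_congr rfl (fun k _ => mul_comm _ _), hsym]
    by_cases hij : i = j
    · subst hij; simp
    · rw [if_neg (Ne.symm hij), if_neg hij]; ring
end

section
/- Let K ≥ 1, κ > 0, let (π_j)_{j≥1} be nonnegative reals with ∑_{j≥1} π_j = 1 and β := ∑_{j≥1} j π_j < ∞, and let x ∈ ℝ^K have nonnegative entries with S_K ≤ 1. For i ∈ {1,…,K} define μ_i(x) := κ ∑_{j=1}^∞ π_j (S_i^{j+1} − S_{i−1}^{j+1} − x_i). Then for every i, |μ_i(x)| ≤ 2 κ β x_i (1 − x_i). -/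
/-!
Write `a = S_{i-1}` and `b = S_i = a + x_i`, so `0 ≤ a ≤ b ≤ 1`. Factoring
`b^{n+1} - a^{n+1} = (b - a) T` with `T = ∑_{k ≤ n} b^k a^{n-k}`, Bernoulli's inequality gives
`T ≥ b^n ≥ 1 - n (1 - b)`, while `T ≤ 1 + n a` since every term but `b^n` is at most `a`.
Both `a` and `1 - b` are at most `1 - x_i`, so each term of the series defining `μ_i` is at most
`n π_n x_i (1 - x_i)` in absolute value, and summing gives `|μ_i| ≤ κ β x_i (1 - x_i)`.
-/

open Finset

section PowSubPow

variable {a b : ℝ}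

lemma geom_sum₂_le_one_add_mul (ha : 0 ≤ a) (hab : a ≤ b) (hb : b ≤ 1) (n : ℕ) :
    ∑ k ∈ range (n + 1), b ^ k * a ^ (n - k) ≤ 1 + n * a := by
  rw [sum_range_succ, Nat.sub_self, pow_zero, mul_one, add_comm]
  gcongr
  · exact pow_le_one₀ (ha.trans hab) hb
  · calc ∑ k ∈ range n, b ^ k * a ^ (n - k) ≤ ∑ _k ∈ range n, a := by
          refine sum_le_sum fun k hk => ?_
          have hkn : n - k ≠ 0 := by simp at hk; omega
          calc b ^ k * a ^ (n - k) ≤ 1 * a := by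
                gcongr
                · exact pow_le_one₀ (ha.trans hab) hb
                · exact pow_le_of_le_one ha (hab.trans hb) hkn
            _ = a := one_mul a
      _ = n * a := by simp

lemma pow_le_geom_sum₂ (ha : 0 ≤ a) (hab : a ≤ b) (n : ℕ) :
    b ^ n ≤ ∑ k ∈ range (n + 1), b ^ k * a ^ (n - k) := by
  rw [sum_range_succ, Nat.sub_self, pow_zero, mul_one, le_add_iff_nonneg_left]
  exact sum_nonneg fun k _ => by have := ha.trans hab; positivity

lemma abs_pow_sub_pow_sub_sub_le (ha : 0 ≤ a) (hab : a ≤ b) (hb : b ≤ 1) (n : ℕ) :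
    |b ^ (n + 1) - a ^ (n + 1) - (b - a)| ≤ n * ((b - a) * (1 - (b - a))) := by
  set T := ∑ k ∈ range (n + 1), b ^ k * a ^ (n - k)
  have hfactor : b ^ (n + 1) - a ^ (n + 1) - (b - a) = (T - 1) * (b - a) := by
    rw [← geom_sum₂_mul]
    simp only [Nat.add_sub_cancel, T]
    ring
  have hbernoulli : 1 + n * (b - 1) ≤ b ^ n := one_add_mul_sub_le_pow (by linarith) n
  have hupper := geom_sum₂_le_one_add_mul ha hab hb n
  have hlower := pow_le_geom_sum₂ ha hab n
  have hT : |T - 1| ≤ n * (1 - (b - a)) := by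
    have hn : (0 : ℝ) ≤ n := n.cast_nonneg
    rw [abs_le]
    constructor <;> nlinarith
  rw [hfactor, abs_mul, abs_of_nonneg (sub_nonneg.mpr hab), ← mul_assoc, mul_right_comm]
  exact mul_le_mul_of_nonneg_right hT (sub_nonneg.mpr hab)

end PowSubPow

lemma abs_tsum_mul_le_of_abs_le_succ_mul {p f : ℕ → ℝ} {β c : ℝ} (hp : ∀ j, 0 ≤ p j)
    (hβ : HasSum (fun j : ℕ => (j + 1 : ℝ) * p j) β) (hf : ∀ j, |f j| ≤ (j + 1) * c) :
    |∑' j, p j * f j| ≤ β * c := by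
  rw [← Real.norm_eq_abs]
  refine tsum_of_norm_bounded (hβ.mul_right c) fun j => ?_
  calc ‖p j * f j‖ = p j * |f j| := by rw [Real.norm_eq_abs, abs_mul, abs_of_nonneg (hp j)]
    _ ≤ p j * ((j + 1) * c) := mul_le_mul_of_nonneg_left (hf j) (hp j)
    _ = (j + 1) * p j * c := by ring

lemma sum_Icc_one_pred_add {M : Type*} [AddCommMonoid M] (x : ℕ → M) {i : ℕ} (hi : 1 ≤ i) :
    ∑ k ∈ Icc 1 (i - 1), x k + x i = ∑ k ∈ Icc 1 i, x k := by
  obtain ⟨m, rfl⟩ : ∃ m, i = m + 1 := ⟨i - 1, by omega⟩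
  rw [Nat.add_sub_cancel, sum_Icc_succ_top (by omega)]

lemma sum_Icc_one_le_of_le {x : ℕ → ℝ} {i K : ℕ} (hx : ∀ k ∈ Icc 1 K, 0 ≤ x k) (hiK : i ≤ K) :
    ∑ k ∈ Icc 1 i, x k ≤ ∑ k ∈ Icc 1 K, x k :=
  sum_le_sum_of_subset_of_nonneg (Icc_subset_Icc_right hiK) fun k hk _ => hx k hk

theorem stmt12_general (K : ℕ) (κ : ℝ) (hκ : 0 < κ)
    (π : ℕ → ℝ) (hπ : ∀ j, 1 ≤ j → 0 ≤ π j)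
    (hβsum : Summable (fun j : ℕ => (j + 1 : ℝ) * π (j + 1)))
    (β : ℝ) (hβ : β = ∑' j : ℕ, (j + 1 : ℝ) * π (j + 1))
    (x : ℕ → ℝ) (hx : ∀ i ∈ Icc 1 K, 0 ≤ x i)
    (S : ℕ → ℝ) (hS : ∀ j, S j = ∑ k ∈ Icc 1 j, x k) (hSK : S K ≤ 1)
    (μ : ℕ → ℝ)
    (hμ : ∀ i ∈ Icc 1 K,
      μ i = κ * ∑' j : ℕ, π (j + 1) * (S i ^ (j + 2) - S (i - 1) ^ (j + 2) - x i)) :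
    ∀ i ∈ Icc 1 K, |μ i| ≤ 2 * κ * β * (x i * (1 - x i)) := by
  intro i hi
  obtain ⟨hi1, hiK⟩ := mem_Icc.mp hi
  have hxi : x i = S i - S (i - 1) := by rw [hS, hS, ← sum_Icc_one_pred_add x hi1]; ring
  have hS_nonneg : 0 ≤ S (i - 1) :=
    (hS _).symm ▸ sum_nonneg fun k hk => hx k (Icc_subset_Icc_right (by omega) hk)
  have hSi_le : S i ≤ 1 := (hS i ▸ hS K ▸ sum_Icc_one_le_of_le hx hiK).trans hSK
  have hseries : |∑' j : ℕ, π (j + 1) * (S i ^ (j + 2) - S (i - 1) ^ (j + 2) - x i)|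
      ≤ β * (x i * (1 - x i)) := by
    refine abs_tsum_mul_le_of_abs_le_succ_mul (fun j => hπ (j + 1) (by omega))
      (hβ ▸ hβsum.hasSum) fun j => ?_
    rw [hxi]
    exact_mod_cast abs_pow_sub_pow_sub_sub_le hS_nonneg (by linarith [hx i hi]) hSi_le (j + 1)
  have hβ_nonneg : 0 ≤ β :=
    hβ ▸ tsum_nonneg fun j => mul_nonneg (by positivity) (hπ (j + 1) (by omega))
  have hvar_nonneg : 0 ≤ x i * (1 - x i) := mul_nonneg (hx i hi) (by linarith)
  rw [hμ i hi, abs_mul, abs_of_pos hκ]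
  calc κ * |_| ≤ κ * (β * (x i * (1 - x i))) := mul_le_mul_of_nonneg_left hseries hκ.le
    _ ≤ 2 * κ * β * (x i * (1 - x i)) := by nlinarith [mul_nonneg hβ_nonneg hvar_nonneg]

/-- Transitive-ordering case of Lemma 3.10: |μ_i(x)| ≤ 2κβ x_i(1−x_i), where
β = ∑_{j≥1} j π_j. The index j ≥ 1 of the paper is encoded as j+1 with j : ℕ. -/
theorem stmt12 (K : ℕ) (hK : 1 ≤ K) (κ : ℝ) (hκ : 0 < κ)
    (π : ℕ → ℝ) (hπ : ∀ j, 1 ≤ j → 0 ≤ π j) (hπsum : ∑' j : ℕ, π (j + 1) = 1)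
    (hβsum : Summable (fun j : ℕ => (j + 1 : ℝ) * π (j + 1)))
    (β : ℝ) (hβ : β = ∑' j : ℕ, (j + 1 : ℝ) * π (j + 1))
    (x : ℕ → ℝ) (hx : ∀ i ∈ Icc 1 K, 0 ≤ x i)
    (S : ℕ → ℝ) (hS : ∀ j, S j = ∑ k ∈ Icc 1 j, x k) (hSK : S K ≤ 1)
    (μ : ℕ → ℝ)
    (hμ : ∀ i ∈ Icc 1 K,
      μ i = κ * ∑' j : ℕ, π (j + 1) * (S i ^ (j + 2) - S (i - 1) ^ (j + 2) - x i)) :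
    ∀ i ∈ Icc 1 K, |μ i| ≤ 2 * κ * β * (x i * (1 - x i)) :=
  stmt12_general K κ hκ π hπ hβsum β hβ x hx S hS hSK μ hμ
end

section
/- Let n ≥ 3, C ≥ 0, let x ∈ ℝⁿ have nonnegative entries with x_1 + ⋯ + x_n = 1 and x_n < 1, and let s_1, …, s_{n−1} be real numbers with |s_i| ≤ C for all i. Set μ_i := x_i(1 − x_i) s_i and y_i := x_i/(1 − x_n) for i ≤ n−1, and define μ̃_i := μ_i − y_i ∑_{j=1}^{n−1} μ_j. Then for every i ≤ n−1, |μ̃_i| ≤ 2 C (1 − x_n) y_i (1 − y_i). -/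
/-!
Write `T = ∑_{j ≤ n-1} x_j = 1 - x_n`, so that `y_i = x_i / T`. Since `|μ_j| ≤ C x_j`, the identity
`T μ̃_i = (T - x_i) μ_i - x_i ∑_{j ≠ i} μ_j` bounds `|T μ̃_i|` by
`(T - x_i) C x_i + x_i C (T - x_i) = 2 C T² y_i (1 - y_i)`.
-/

open Finset

theorem abs_mul_one_sub_mul_le {a s C : ℝ} (ha₀ : 0 ≤ a) (ha₁ : a ≤ 1) (hs : |s| ≤ C) :
    |a * (1 - a) * s| ≤ C * a := by
  rw [abs_mul, abs_mul, abs_of_nonneg ha₀, abs_of_nonneg (sub_nonneg.2 ha₁)]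
  calc a * (1 - a) * |s| ≤ a * 1 * C := by gcongr; linarith
    _ = C * a := by ring

section WeightedSum

variable {ι : Type*} [DecidableEq ι] {S : Finset ι} {x μ : ι → ℝ} {C : ℝ} {i : ι}

theorem abs_sum_mul_sub_mul_sum_le (hi : i ∈ S) (hx : ∀ j ∈ S, 0 ≤ x j)
    (hμ : ∀ j ∈ S, |μ j| ≤ C * x j) :
    |(∑ j ∈ S, x j) * μ i - x i * ∑ j ∈ S, μ j| ≤ 2 * C * x i * (∑ j ∈ S, x j - x i) := by
  set T := ∑ j ∈ S, x j
  have hrest : ∑ j ∈ S.erase i, x j = T - x i := sum_erase_eq_sub hi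
  have hxiT : 0 ≤ T - x i := hrest ▸ sum_nonneg fun j hj => hx j (mem_of_mem_erase hj)
  have hsplit : T * μ i - x i * ∑ j ∈ S, μ j = (T - x i) * μ i - x i * ∑ j ∈ S.erase i, μ j := by
    rw [← add_sum_erase S μ hi]; ring
  have hrest_le : |∑ j ∈ S.erase i, μ j| ≤ C * (T - x i) :=
    calc |∑ j ∈ S.erase i, μ j| ≤ ∑ j ∈ S.erase i, |μ j| := abs_sum_le_sum_abs _ _
      _ ≤ ∑ j ∈ S.erase i, C * x j := sum_le_sum fun j hj => hμ j (mem_of_mem_erase hj)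
      _ = C * (T - x i) := by rw [← mul_sum, hrest]
  rw [hsplit]
  calc |(T - x i) * μ i - x i * ∑ j ∈ S.erase i, μ j|
      ≤ |(T - x i) * μ i| + |x i * ∑ j ∈ S.erase i, μ j| := abs_sub _ _
    _ ≤ (T - x i) * (C * x i) + x i * (C * (T - x i)) := by
      rw [abs_mul, abs_mul, abs_of_nonneg hxiT, abs_of_nonneg (hx i hi)]
      gcongr
      · exact hμ i hi
      · exact hx i hi
    _ = 2 * C * x i * (T - x i) := by ring

theorem abs_sub_div_mul_sum_le (hi : i ∈ S) (hx : ∀ j ∈ S, 0 ≤ x j)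
    (hμ : ∀ j ∈ S, |μ j| ≤ C * x j) (hT : 0 < ∑ j ∈ S, x j) :
    |μ i - x i / (∑ j ∈ S, x j) * ∑ j ∈ S, μ j|
      ≤ 2 * C * (∑ j ∈ S, x j) * (x i / (∑ j ∈ S, x j) * (1 - x i / (∑ j ∈ S, x j))) := by
  set T := ∑ j ∈ S, x j
  have hlhs : μ i - x i / T * ∑ j ∈ S, μ j = (T * μ i - x i * ∑ j ∈ S, μ j) / T := by
    field_simp
  have hrhs : 2 * C * T * (x i / T * (1 - x i / T)) = 2 * C * x i * (T - x i) / T := by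
    field_simp
  rw [hlhs, hrhs, abs_div, abs_of_pos hT]
  exact div_le_div_of_nonneg_right (abs_sum_mul_sub_mul_sum_le hi hx hμ) hT.le

end WeightedSum

theorem stmt14_general (n : ℕ) (hn : 3 ≤ n) (C : ℝ)
    (x : ℕ → ℝ) (hx : ∀ i ∈ Icc 1 n, 0 ≤ x i)
    (hsum : ∑ i ∈ Icc 1 n, x i = 1) (hxn : x n < 1)
    (s : ℕ → ℝ) (hs : ∀ i ∈ Icc 1 (n - 1), |s i| ≤ C)
    (μ y μt : ℕ → ℝ)
    (hμ : ∀ i, μ i = x i * (1 - x i) * s i)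
    (hy : ∀ i, y i = x i / (1 - x n))
    (hμt : ∀ i, μt i = μ i - y i * ∑ j ∈ Icc 1 (n - 1), μ j) :
    ∀ i ∈ Icc 1 (n - 1), |μt i| ≤ 2 * C * (1 - x n) * (y i * (1 - y i)) := by
  intro i hi
  have hsub : Icc 1 (n - 1) ⊆ Icc 1 n := Icc_subset_Icc_right (Nat.sub_le n 1)
  have hx' : ∀ j ∈ Icc 1 (n - 1), 0 ≤ x j := fun j hj => hx j (hsub hj)
  have hT : ∑ j ∈ Icc 1 (n - 1), x j = 1 - x n := by
    have := sum_Icc_succ_top (by omega : 1 ≤ n - 1 + 1) x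
    rw [Nat.sub_add_cancel (by omega : 1 ≤ n)] at this
    linarith
  have hx_le_one : ∀ j ∈ Icc 1 (n - 1), x j ≤ 1 := fun j hj => by
    linarith [single_le_sum hx' hj, hx n (right_mem_Icc.2 (by omega))]
  have hμC : ∀ j ∈ Icc 1 (n - 1), |μ j| ≤ C * x j := fun j hj =>
    hμ j ▸ abs_mul_one_sub_mul_le (hx' j hj) (hx_le_one j hj) (hs j hj)
  have key := abs_sub_div_mul_sum_le hi hx' hμC (by linarith)
  rwa [hT, ← hy, ← hμt] at key

/-- Key bound in Lemma 5.2 (leminduction): the projected drift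
μ̃_i = μ_i − y_i ∑_{j≤n−1} μ_j satisfies |μ̃_i| ≤ 2C(1−x_n) y_i(1−y_i). -/
theorem stmt14 (n : ℕ) (hn : 3 ≤ n) (C : ℝ) (hC : 0 ≤ C)
    (x : ℕ → ℝ) (hx : ∀ i ∈ Icc 1 n, 0 ≤ x i)
    (hsum : ∑ i ∈ Icc 1 n, x i = 1) (hxn : x n < 1)
    (s : ℕ → ℝ) (hs : ∀ i ∈ Icc 1 (n - 1), |s i| ≤ C)
    (μ y μt : ℕ → ℝ)
    (hμ : ∀ i, μ i = x i * (1 - x i) * s i)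
    (hy : ∀ i, y i = x i / (1 - x n))
    (hμt : ∀ i, μt i = μ i - y i * ∑ j ∈ Icc 1 (n - 1), μ j) :
    ∀ i ∈ Icc 1 (n - 1), |μt i| ≤ 2 * C * (1 - x n) * (y i * (1 - y i)) :=
  stmt14_general n hn C x hx hsum hxn s hs μ y μt hμ hy hμt
end
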